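/- arXiv:1506.01442 — 3 statements merged into one kernel-verified Lean document; each statement's English description precedes it below -/
import Mathlib

section
/- For real p and natural number k with k > p ≥ 0, the absolute value of the generalized binomial coefficient satisfies |C(p,k)| ≤ (p/k)^(⌊p⌋+1). In particular, if p is a nonnegative integer with k > p, then C(p,k) = 0. -/
/-!
Write `C(p, k) = ∏_{i < k} (p - i) / (k - i)` and let `n = ⌊p⌋`. For `k = n + 1` every factor
lies in `[0, p / k]`, which gives the bound at the first index past `p`. Passing from `k` to
`k + 1` multiplies `|C(p, k)|` by `(k - p) / (k + 1) ≤ (k - n) / (k + 1) ≤ (k / (k + 1)) ^ (n + 1)`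
(Bernoulli's inequality), exactly the factor turning `(p / k) ^ (n + 1)` into
`(p / (k + 1)) ^ (n + 1)`.
-/

/-- Generalized binomial coefficient `C(p,k) = p(p-1)⋯(p-k+1)/k!` for real `p`. -/
noncomputable def genBinom (p : ℝ) (k : ℕ) : ℝ :=
  (∏ i ∈ Finset.range k, (p - i)) / (Nat.factorial k)

open Finset

lemma factorial_eq_prod_range_sub (k : ℕ) : (k.factorial : ℝ) = ∏ i ∈ range k, ((k : ℝ) - i) := by
  rw [← Nat.descFactorial_self, Nat.descFactorial_eq_prod_range, Nat.cast_prod]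
  refine prod_congr rfl fun i hi => ?_
  rw [Nat.cast_sub (mem_range.mp hi).le]

lemma genBinom_eq_prod_div (p : ℝ) (k : ℕ) :
    genBinom p k = ∏ i ∈ range k, (p - i) / (k - i) := by
  rw [genBinom, factorial_eq_prod_range_sub, prod_div_distrib]

lemma genBinom_succ (p : ℝ) (k : ℕ) :
    genBinom p (k + 1) = genBinom p k * ((p - k) / (k + 1)) := by
  rw [genBinom, genBinom, prod_range_succ, Nat.factorial_succ]
  push_cast
  field_simp

lemma genBinom_natCast_of_lt {m k : ℕ} (h : m < k) : genBinom m k = 0 := by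
  rw [genBinom, prod_eq_zero (mem_range.mpr h) (sub_self _), zero_div]

lemma sub_div_sub_le_div {p x K : ℝ} (hx : 0 ≤ x) (hpK : p ≤ K) (hxK : x < K) :
    (p - x) / (K - x) ≤ p / K := by
  rw [div_le_div_iff₀ (by linarith) (by linarith)]
  nlinarith

lemma abs_genBinom_le_of_sub_one_le {p : ℝ} {k : ℕ} (hkp : (k : ℝ) - 1 ≤ p) (hpk : p ≤ k) :
    |genBinom p k| ≤ (p / k) ^ k := by
  have hfactor : ∀ i ∈ range k, 0 ≤ (p - i) / (k - i) ∧ (p - i) / (k - i) ≤ p / k := by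
    intro i hi
    have hik : (i : ℝ) + 1 ≤ k := by exact_mod_cast mem_range.mp hi
    exact ⟨div_nonneg (by linarith) (by linarith),
      sub_div_sub_le_div i.cast_nonneg hpk (by linarith)⟩
  rw [genBinom_eq_prod_div, abs_of_nonneg (prod_nonneg fun i hi => (hfactor i hi).1)]
  calc ∏ i ∈ range k, (p - i) / (k - i) ≤ ∏ _i ∈ range k, p / k :=
        prod_le_prod (fun i hi => (hfactor i hi).1) fun i hi => (hfactor i hi).2
    _ = (p / k) ^ k := by rw [prod_const, card_range]

lemma sub_div_succ_le_pow (j n : ℕ) :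
    ((j : ℝ) - n) / (j + 1) ≤ ((j : ℝ) / (j + 1)) ^ (n + 1) := by
  have hj : (1 : ℝ) ≤ j + 1 := by simp
  have hlast : (j : ℝ) / (j + 1) = 1 + -(1 / (j + 1)) := by field_simp; ring
  have hfirst : ((j : ℝ) - n) / (j + 1) = 1 + ((n + 1 : ℕ) : ℝ) * -(1 / (j + 1)) := by
    push_cast; field_simp; ring
  rw [hlast, hfirst]
  exact one_add_mul_le_pow (by linarith [div_le_one_of_le₀ hj (by linarith)]) (n + 1)

lemma abs_genBinom_succ_le {p : ℝ} {n j : ℕ} (hnp : (n : ℝ) ≤ p) (hpj : p < j)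
    (ih : |genBinom p j| ≤ (p / j) ^ (n + 1)) :
    |genBinom p (j + 1)| ≤ (p / (j + 1 : ℕ)) ^ (n + 1) := by
  have hp : 0 ≤ p := n.cast_nonneg.trans hnp
  have hj : (0 : ℝ) < j := hp.trans_lt hpj
  have hratio : 0 ≤ (j - p) / (j + 1) := div_nonneg (by linarith) (by positivity)
  calc |genBinom p (j + 1)| = |genBinom p j| * ((j - p) / (j + 1)) := by
        rw [genBinom_succ, abs_mul, ← abs_of_nonneg hratio, abs_div, abs_div, abs_sub_comm]
    _ ≤ (p / j) ^ (n + 1) * ((j - n) / (j + 1)) := by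
        gcongr
    _ ≤ (p / j) ^ (n + 1) * (j / (j + 1)) ^ (n + 1) := by
        gcongr; exact sub_div_succ_le_pow j n
    _ = (p / (j + 1 : ℕ)) ^ (n + 1) := by
        rw [← mul_pow]; push_cast; field_simp

theorem abs_genBinom_le {p : ℝ} {k : ℕ} (hp : 0 ≤ p) (hk : p < k) :
    |genBinom p k| ≤ (p / k) ^ (⌊p⌋₊ + 1) := by
  have hkn : ⌊p⌋₊ + 1 ≤ k := (Nat.floor_lt hp).mpr hk
  have hfloor : (⌊p⌋₊ : ℝ) ≤ p := Nat.floor_le hp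
  have hfloor_succ : p < ⌊p⌋₊ + 1 := Nat.lt_floor_add_one p
  clear hk
  induction k, hkn using Nat.le_induction with
  | base =>
    exact abs_genBinom_le_of_sub_one_le (by push_cast; linarith) (by push_cast; linarith)
  | succ j hj ih =>
    have hpj : p < j := hfloor_succ.trans_le (by exact_mod_cast hj)
    exact abs_genBinom_succ_le hfloor hpj ih

/-- For real `p` and natural `k` with `k > p ≥ 0`, `|C(p,k)| ≤ (p/k)^(⌊p⌋+1)`;
in particular, if `p` is a nonnegative integer then `C(p,k) = 0`. -/
theorem stmt0 (p : ℝ) (k : ℕ) (hp : 0 ≤ p) (hk : p < k) :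
    |genBinom p k| ≤ (p / k) ^ (⌊p⌋₊ + 1) ∧
    (∀ m : ℕ, p = m → genBinom p k = 0) := by
  refine ⟨abs_genBinom_le hp hk, ?_⟩
  rintro m rfl
  exact genBinom_natCast_of_lt (by exact_mod_cast hk)
end

section
/- Let X₁,…,X_k be independent real random variables each with expectation μ and variance at most σ², let λ ∈ ℝ, let η² = σ² + (μ−λ)², and let ψ be analytic on the interval between λ and μ. Then the variance of the Taylor polynomial estimator ϑ = Σ_{j=0}^{k} γ_j(λ) ∏_{l=1}^{j}(X_l − λ) satisfies Var[ϑ] ≤ (Σ_{j=1}^{k} |γ_j(λ)| η^j)². -/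
/-!
The `j = 0` term of the estimator is constant, so only `∑_{j ≥ 1} γ_j ∏_{l < j} (X_l - λ)`
contributes to the variance. Minkowski's inequality in `L²` bounds its standard deviation by
`∑ |γ_j| · sd(∏_{l < j} (X_l - λ))`, and by independence the second moment of that product is
`∏_{l < j} E[(X_l - λ)²] = ∏_{l < j} (Var X_l + (μ - λ)²) ≤ η^{2j}`.
-/

open MeasureTheory ProbabilityTheory Finset

namespace ProbabilityTheory

variable {Ω ι : Type*} [MeasurableSpace Ω] {P : Measure Ω}

lemma evariance_eq_eLpNorm_sq (X : Ω → ℝ) (P : Measure Ω) :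
    evariance X P = eLpNorm (fun ω => X ω - P[X]) 2 P ^ 2 := by
  rw [eLpNorm_eq_lintegral_rpow_enorm_toReal two_ne_zero ENNReal.ofNat_ne_top, evariance,
    ← ENNReal.rpow_natCast, ← ENNReal.rpow_mul]
  norm_num

lemma sqrt_variance_eq_toReal_eLpNorm (X : Ω → ℝ) (P : Measure Ω) :
    √(variance X P) = (eLpNorm (fun ω => X ω - P[X]) 2 P).toReal := by
  rw [variance, evariance_eq_eLpNorm_sq, ENNReal.toReal_pow, Real.sqrt_sq ENNReal.toReal_nonneg]

lemma sqrt_variance_sum_le [IsFiniteMeasure P] {f : ι → Ω → ℝ} (s : Finset ι)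
    (hf : ∀ i ∈ s, MemLp (f i) 2 P) :
    √(variance (fun ω => ∑ i ∈ s, f i ω) P) ≤ ∑ i ∈ s, √(variance (f i) P) := by
  have hcentred : ∀ i ∈ s, MemLp (fun ω => f i ω - P[f i]) 2 P :=
    fun i hi => (hf i hi).sub (memLp_const _)
  have hmean : P[fun ω => ∑ i ∈ s, f i ω] = ∑ i ∈ s, P[f i] :=
    integral_finsetSum s fun i hi => (hf i hi).integrable one_le_two
  have hsum : (fun ω => ∑ i ∈ s, f i ω - P[fun ω => ∑ i ∈ s, f i ω])
      = ∑ i ∈ s, fun ω => f i ω - P[f i] := by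
    ext ω
    simp only [hmean, sum_sub_distrib, Finset.sum_apply]
  simp_rw [sqrt_variance_eq_toReal_eLpNorm, hsum]
  rw [← ENNReal.toReal_sum fun i hi => (hcentred i hi).eLpNorm_ne_top]
  exact ENNReal.toReal_mono (ENNReal.sum_ne_top.2 fun i hi => (hcentred i hi).eLpNorm_ne_top)
    (eLpNorm_sum_le (fun i hi => (hcentred i hi).aestronglyMeasurable) one_le_two)

lemma integral_sub_sq_eq_variance_add [IsProbabilityMeasure P] {X : Ω → ℝ} (hX : MemLp X 2 P)
    (c : ℝ) : ∫ ω, (X ω - c) ^ 2 ∂P = variance X P + (P[X] - c) ^ 2 := by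
  have hXc : MemLp (fun ω => X ω - c) 2 P := hX.sub (memLp_const c)
  have h := variance_eq_sub hXc
  rw [variance_sub_const hX.aestronglyMeasurable,
    integral_sub (hX.integrable one_le_two) (integrable_const c), integral_const] at h
  simp only [probReal_univ, smul_eq_mul, one_mul, Pi.pow_apply] at h
  linarith

namespace iIndepFun

variable {f : ι → Ω → ℝ}

lemma integrable_finsetProd (hindep : iIndepFun f P) (hf : ∀ i, Integrable (f i) P)
    (s : Finset ι) : Integrable (fun ω => ∏ i ∈ s, f i ω) P := by
  classical
  have := hindep.isProbabilityMeasure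
  induction s using Finset.induction with
  | empty => simp
  | insert a s ha ih =>
    have hind := (hindep.indepFun_finsetProd_of_notMem₀ (fun i => (hf i).aemeasurable) ha).symm
    have hprod : Integrable (∏ i ∈ s, f i) P := by simpa only [← Finset.prod_fn] using ih
    have hfun : (fun ω => ∏ i ∈ insert a s, f i ω) = f a * ∏ i ∈ s, f i := by
      ext ω
      simp only [prod_insert ha, Pi.mul_apply, Finset.prod_apply]
    exact hfun ▸ hind.integrable_mul (hf a) hprod

lemma integral_finsetProd (hindep : iIndepFun f P) (hf : ∀ i, AEStronglyMeasurable (f i) P)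
    (s : Finset ι) : ∫ ω, ∏ i ∈ s, f i ω ∂P = ∏ i ∈ s, ∫ ω, f i ω ∂P := by
  simp_rw [← prod_coe_sort s]
  exact (hindep.precomp Subtype.val_injective).integral_fun_prod_eq_prod_integral
    (fun i : s => hf i)

lemma memLp_two_finsetProd (hindep : iIndepFun f P) (hf : ∀ i, MemLp (f i) 2 P)
    (s : Finset ι) : MemLp (fun ω => ∏ i ∈ s, f i ω) 2 P := by
  refine (memLp_two_iff_integrable_sq
    (aestronglyMeasurable_fun_prod s fun i _ => (hf i).aestronglyMeasurable)).2 ?_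
  simp_rw [← prod_pow]
  exact (hindep.comp (fun _ x => x ^ 2) fun _ => by fun_prop).integrable_finsetProd
    (fun i => (hf i).integrable_sq) s

lemma variance_finsetProd_le (hindep : iIndepFun f P) (hf : ∀ i, AEStronglyMeasurable (f i) P)
    (s : Finset ι) :
    variance (fun ω => ∏ i ∈ s, f i ω) P ≤ ∏ i ∈ s, ∫ ω, f i ω ^ 2 ∂P := by
  have := hindep.isProbabilityMeasure
  have hsq : iIndepFun (fun i ω => f i ω ^ 2) P :=
    hindep.comp (fun _ x => x ^ 2) fun _ => by fun_prop
  calc variance (fun ω => ∏ i ∈ s, f i ω) P ≤ ∫ ω, (∏ i ∈ s, f i ω) ^ 2 ∂P :=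
        variance_le_expectation_sq (aestronglyMeasurable_fun_prod s fun i _ => hf i)
    _ = ∫ ω, ∏ i ∈ s, f i ω ^ 2 ∂P := by simp_rw [prod_pow]
    _ = ∏ i ∈ s, ∫ ω, f i ω ^ 2 ∂P :=
        hsq.integral_finsetProd (fun i => (hf i).pow 2) s

end iIndepFun

lemma sqrt_variance_prod_sub_le {X : ι → Ω → ℝ} {μ σ : ℝ} (hindep : iIndepFun X P)
    (hL2 : ∀ i, MemLp (X i) 2 P) (hmean : ∀ i, P[X i] = μ) (hvar : ∀ i, variance (X i) P ≤ σ ^ 2)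
    (c : ℝ) (s : Finset ι) :
    √(variance (fun ω => ∏ i ∈ s, (X i ω - c)) P) ≤ √(σ ^ 2 + (μ - c) ^ 2) ^ #s := by
  have := hindep.isProbabilityMeasure
  have hshift : iIndepFun (fun i ω => X i ω - c) P :=
    hindep.comp (fun _ x => x - c) fun _ => by fun_prop
  have hmoment : ∀ i, ∫ ω, (X i ω - c) ^ 2 ∂P ≤ σ ^ 2 + (μ - c) ^ 2 := fun i => by
    rw [integral_sub_sq_eq_variance_add (hL2 i), hmean i]
    gcongr
    exact hvar i
  have hvar_prod : variance (fun ω => ∏ i ∈ s, (X i ω - c)) P ≤ (σ ^ 2 + (μ - c) ^ 2) ^ #s :=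
    calc variance (fun ω => ∏ i ∈ s, (X i ω - c)) P ≤ ∏ i ∈ s, ∫ ω, (X i ω - c) ^ 2 ∂P :=
          hshift.variance_finsetProd_le
            (fun i => ((hL2 i).sub (memLp_const c)).aestronglyMeasurable) s
      _ ≤ ∏ i ∈ s, (σ ^ 2 + (μ - c) ^ 2) :=
          prod_le_prod (fun i _ => integral_nonneg fun _ => sq_nonneg _) fun i _ => hmoment i
      _ = (σ ^ 2 + (μ - c) ^ 2) ^ #s := prod_const _
  rw [Real.sqrt_le_iff]
  refine ⟨by positivity, ?_⟩
  rwa [← pow_mul, mul_comm, pow_mul, Real.sq_sqrt (by positivity)]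

end ProbabilityTheory

theorem stmt2_general {Ω : Type*} [MeasurableSpace Ω] (P : Measure Ω) [IsProbabilityMeasure P]
    (k : ℕ) (X : Fin k → Ω → ℝ) (μ σ lam : ℝ) (ψ : ℝ → ℝ)
    (hindep : iIndepFun X P)
    (hL2 : ∀ l, MemLp (X l) 2 P)
    (hmean : ∀ l, ∫ ω, X l ω ∂P = μ)
    (hvar : ∀ l, variance (X l) P ≤ σ ^ 2) :
    variance (fun ω => ∑ j ∈ Finset.range (k + 1),
        (iteratedDeriv j ψ lam / (Nat.factorial j)) *
          ∏ l ∈ Finset.univ.filter (fun l : Fin k => (l : ℕ) < j), (X l ω - lam)) P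
      ≤ (∑ j ∈ Finset.Icc 1 k,
          |iteratedDeriv j ψ lam / (Nat.factorial j)| *
            Real.sqrt (σ ^ 2 + (μ - lam) ^ 2) ^ j) ^ 2 := by
  set γ : ℕ → ℝ := fun j => iteratedDeriv j ψ lam / (Nat.factorial j)
  set g : ℕ → Ω → ℝ := fun j ω => ∏ l ∈ univ.filter (fun l : Fin k => (l : ℕ) < j), (X l ω - lam)
  have hg : ∀ j, MemLp (g j) 2 P := fun j =>
    (hindep.comp (fun _ x => x - lam) fun _ => by fun_prop).memLp_two_finsetProd
      (fun l => (hL2 l).sub (memLp_const lam)) _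
  have hθ : (fun ω => ∑ j ∈ range (k + 1), γ j * g j ω)
      = fun ω => γ 0 + ∑ j ∈ Icc 1 k, γ j * g j ω := by
    ext ω
    rw [sum_range_eq_add_Ico _ k.add_one_pos, Finset.Ico_add_one_right_eq_Icc]
    simp [g]
  have hterm : ∀ j ∈ Icc 1 k,
      √(variance (fun ω => γ j * g j ω) P) ≤ |γ j| * √(σ ^ 2 + (μ - lam) ^ 2) ^ j := by
    intro j hj
    rw [variance_const_mul, Real.sqrt_mul (sq_nonneg _), Real.sqrt_sq_eq_abs]
    gcongr
    simpa [Fin.card_filter_val_lt, (mem_Icc.1 hj).2] using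
      sqrt_variance_prod_sub_le hindep hL2 hmean hvar lam
        (univ.filter (fun l : Fin k => (l : ℕ) < j))
  calc variance (fun ω => ∑ j ∈ range (k + 1), γ j * g j ω) P
      = variance (fun ω => ∑ j ∈ Icc 1 k, γ j * g j ω) P := by
        rw [hθ, variance_const_add]
        exact (memLp_finsetSum _ fun j _ => (hg j).const_mul (γ j)).aestronglyMeasurable
    _ = √(variance (fun ω => ∑ j ∈ Icc 1 k, γ j * g j ω) P) ^ 2 :=
        (Real.sq_sqrt (variance_nonneg _ _)).symm
    _ ≤ (∑ j ∈ Icc 1 k, |γ j| * √(σ ^ 2 + (μ - lam) ^ 2) ^ j) ^ 2 := by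
        gcongr
        exact (sqrt_variance_sum_le _ fun j _ => (hg j).const_mul (γ j)).trans (sum_le_sum hterm)

/-- Variance of the Taylor polynomial estimator:
with `η² = σ² + (μ−λ)²`, `Var[ϑ] ≤ (Σ_{j=1}^{k} |γ_j(λ)| η^j)²`. -/
theorem stmt2 {Ω : Type*} [MeasurableSpace Ω] (P : Measure Ω) [IsProbabilityMeasure P]
    (k : ℕ) (X : Fin k → Ω → ℝ) (μ σ lam : ℝ) (ψ : ℝ → ℝ)
    (hmeas : ∀ l, Measurable (X l))
    (hindep : iIndepFun X P)
    (hL2 : ∀ l, MemLp (X l) 2 P)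
    (hmean : ∀ l, ∫ ω, X l ω ∂P = μ)
    (hvar : ∀ l, variance (X l) P ≤ σ ^ 2)
    (hanal : AnalyticOnNhd ℝ ψ (Set.uIcc lam μ)) :
    variance (fun ω => ∑ j ∈ Finset.range (k + 1),
        (iteratedDeriv j ψ lam / (Nat.factorial j)) *
          ∏ l ∈ Finset.univ.filter (fun l : Fin k => (l : ℕ) < j), (X l ω - lam)) P
      ≤ (∑ j ∈ Finset.Icc 1 k,
          |iteratedDeriv j ψ lam / (Nat.factorial j)| *
            Real.sqrt (σ ^ 2 + (μ - lam) ^ 2) ^ j) ^ 2 :=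
  stmt2_general P k X μ σ lam ψ hindep hL2 hmean hvar
end

section
/- For every integer k ≥ 1 there exists a set Y of binary vectors in {0,1}^{8k} such that |Y| ≥ 2^{0.08k}, every vector in Y has exactly k ones, and any two distinct vectors in Y differ in at least 3k/2 coordinates (minimum Hamming distance ≥ 3k/2). -/
/-!
A code `C ⊆ (Fin 8)ᵏ` with minimum distance `> r` that is maximal for inclusion covers the
space by Hamming balls of radius `r`, so `8ᵏ ≤ |C| · V(r)` with
`V(r) = ∑_{i ≤ r} (k choose i) 7ⁱ` (Gilbert–Varshamov). Weighting the terms of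
`(1 + 7t)ᵏ = ∑ (k choose i) (7t)ⁱ` by `t = 3/7` gives `V(r) ≤ (7/3)ʳ 4ᵏ`, hence for `r = ⌊3k/4⌋`
we get `|C| ≥ (2 (3/7)^{3/4})ᵏ ≥ 2^{0.08k}`. Finally the one-hot encoding `Fin 8 → {0,1}⁸` sends
`C` to words of weight `k` in `{0,1}^{8k}` and exactly doubles Hamming distances.
-/

open Finset

section Hamming

variable {ι β : Type*} [Fintype ι] [DecidableEq ι] [Fintype β] [DecidableEq β]

theorem card_filter_hammingDist_eq (x : ι → β) (r : ℕ) :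
    #{y | hammingDist x y = r} = (Fintype.card ι).choose r * (Fintype.card β - 1) ^ r := by
  let support (y : ι → β) : Finset ι := {i | x i ≠ y i}
  have hfiber : ∀ S ∈ powersetCard r univ,
      #{y ∈ {y | hammingDist x y = r} | support y = S} = (Fintype.card β - 1) ^ r := by
    intro S hS
    rw [mem_powersetCard_univ] at hS
    have : ({y ∈ {y | hammingDist x y = r} | support y = S} : Finset (ι → β))
        = Fintype.piFinset fun i => if i ∈ S then univ.erase (x i) else {x i} := by
      ext y
      simp only [mem_filter, mem_univ, true_and, Fintype.mem_piFinset, support]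
      constructor
      · rintro ⟨-, rfl⟩ i
        by_cases h : x i = y i <;> simp [h, eq_comm]
      · intro h
        have hsupp : ({i | x i ≠ y i} : Finset ι) = S := by
          ext i
          specialize h i
          split_ifs at h with hi <;> simp_all [ne_comm]
        exact ⟨by rw [hammingDist, hsupp, hS], hsupp⟩
    rw [this, Fintype.card_piFinset]
    simp [apply_ite, Finset.prod_ite_mem, hS]
  rw [card_eq_sum_card_fiberwise (f := support) (t := powersetCard r univ)
    (fun y hy => by simpa [support, hammingDist] using hy), sum_congr rfl hfiber, sum_const,
    card_powersetCard, card_univ, smul_eq_mul]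

theorem card_filter_hammingDist_le (x : ι → β) (r : ℕ) :
    #{y | hammingDist x y ≤ r}
      = ∑ i ∈ range (r + 1), (Fintype.card ι).choose i * (Fintype.card β - 1) ^ i := by
  rw [card_eq_sum_card_fiberwise (f := hammingDist x) (t := range (r + 1))
    (fun y hy => by simpa [Nat.lt_succ_iff] using hy)]
  refine sum_congr rfl fun i hi => ?_
  rw [filter_filter, ← card_filter_hammingDist_eq x i]
  congr 1
  ext y
  simp only [mem_filter, mem_univ, true_and, and_iff_right_iff_imp]
  rintro rfl
  simpa [Nat.lt_succ_iff] using hi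

theorem exists_code_covering (r : ℕ) :
    ∃ C : Finset (ι → β), (C : Set (ι → β)).Pairwise (fun x y => r < hammingDist x y) ∧
      ∀ z, ∃ c ∈ C, hammingDist c z ≤ r := by
  obtain ⟨C, hC, hmax⟩ := exists_max_image
    ({C | (C : Set (ι → β)).Pairwise (fun x y => r < hammingDist x y)} :
      Finset (Finset (ι → β))) card ⟨∅, by simp⟩
  simp only [mem_filter, mem_univ, true_and] at hC hmax
  refine ⟨C, hC, fun z => ?_⟩
  by_contra! hfar
  have hz : z ∉ C := fun hz => by simpa using hfar z hz
  have := hmax (insert z C) <| by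
    rw [coe_insert]
    exact hC.insert_of_notMem hz fun c hc => ⟨hammingDist_comm c z ▸ hfar c hc, hfar c hc⟩
  rw [card_insert_of_notMem hz] at this
  omega

theorem card_pow_le_card_mul_sum_of_covering (C : Finset (ι → β)) (r : ℕ)
    (hC : ∀ z, ∃ c ∈ C, hammingDist c z ≤ r) :
    Fintype.card β ^ Fintype.card ι
      ≤ #C * ∑ i ∈ range (r + 1), (Fintype.card ι).choose i * (Fintype.card β - 1) ^ i := by
  calc Fintype.card β ^ Fintype.card ι = #(univ : Finset (ι → β)) := by simp
    _ ≤ #(C.biUnion fun c => {y | hammingDist c y ≤ r}) :=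
        card_le_card fun z _ => by simpa using hC z
    _ ≤ ∑ c ∈ C, #{y | hammingDist c y ≤ r} := card_biUnion_le
    _ = _ := by simp [card_filter_hammingDist_le]

theorem exists_code_card_pow_le (r : ℕ) :
    ∃ C : Finset (ι → β), (C : Set (ι → β)).Pairwise (fun x y => r < hammingDist x y) ∧
      Fintype.card β ^ Fintype.card ι
        ≤ #C * ∑ i ∈ range (r + 1), (Fintype.card ι).choose i * (Fintype.card β - 1) ^ i :=
  let ⟨C, hC, hcover⟩ := exists_code_covering r
  ⟨C, hC, card_pow_le_card_mul_sum_of_covering C r hcover⟩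

end Hamming

theorem sum_range_choose_mul_pow_mul_pow_le {a t : ℝ} (ha : 0 ≤ a) (ht₀ : 0 ≤ t) (ht₁ : t ≤ 1)
    {n r : ℕ} (hrn : r ≤ n) :
    (∑ i ∈ range (r + 1), n.choose i * a ^ i) * t ^ r ≤ (1 + a * t) ^ n :=
  calc (∑ i ∈ range (r + 1), n.choose i * a ^ i) * t ^ r
      = ∑ i ∈ range (r + 1), n.choose i * a ^ i * t ^ r := sum_mul ..
    _ ≤ ∑ i ∈ range (r + 1), n.choose i * (a * t) ^ i := by
        refine sum_le_sum fun i hi => ?_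
        rw [mul_pow, ← mul_assoc]
        exact mul_le_mul_of_nonneg_left
          (pow_le_pow_of_le_one ht₀ ht₁ (Nat.lt_succ_iff.mp (mem_range.mp hi))) (by positivity)
    _ ≤ ∑ i ∈ range (n + 1), n.choose i * (a * t) ^ i :=
        sum_le_sum_of_subset_of_nonneg (range_subset_range.mpr (by omega))
          fun _ _ _ => by positivity
    _ = (1 + a * t) ^ n := by
        rw [add_comm 1, add_pow]
        simp [mul_comm]

theorem two_rpow_le_two_pow_mul_pow {k r : ℕ} (hr : 4 * r ≤ 3 * k) :
    (2 : ℝ) ^ ((0.08 : ℝ) * k) ≤ 2 ^ k * (3 / 7) ^ r := by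
  refine le_of_pow_le_pow_left₀ (n := 100) (by norm_num) (by positivity) ?_
  calc ((2 : ℝ) ^ ((0.08 : ℝ) * k)) ^ 100 = (2 ^ 8) ^ k := by
        rw [← Real.rpow_natCast, ← Real.rpow_mul (by norm_num), ← pow_mul, ← Real.rpow_natCast]
        congr 1
        push_cast
        ring
    _ ≤ (2 ^ 100 * (3 / 7) ^ 75) ^ k := by gcongr; norm_num
    _ = 2 ^ (100 * k) * (3 / 7) ^ (75 * k) := by rw [mul_pow, pow_mul, pow_mul]
    _ ≤ 2 ^ (100 * k) * (3 / 7) ^ (25 * (4 * r)) := by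
        have : ((3 : ℝ) / 7) ^ (75 * k) ≤ (3 / 7) ^ (25 * (4 * r)) :=
          pow_le_pow_of_le_one (by norm_num) (by norm_num) (by omega)
        gcongr
    _ = ((2 : ℝ) ^ k * (3 / 7) ^ r) ^ 100 := by
        rw [mul_pow, ← pow_mul, ← pow_mul]
        ring_nf

theorem two_rpow_le_of_pow_le_mul_sum {k r M : ℕ} (hr : 4 * r ≤ 3 * k)
    (h : 8 ^ k ≤ M * ∑ i ∈ range (r + 1), k.choose i * 7 ^ i) :
    (2 : ℝ) ^ ((0.08 : ℝ) * k) ≤ M := by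
  have hball : (∑ i ∈ range (r + 1), (k.choose i : ℝ) * 7 ^ i) * (3 / 7) ^ r ≤ 4 ^ k := by
    have := sum_range_choose_mul_pow_mul_pow_le (a := 7) (t := 3 / 7) (by norm_num) (by norm_num)
      (by norm_num) (n := k) (r := r) (by omega)
    norm_num at this
    exact this
  have h' : (8 : ℝ) ^ k ≤ M * ∑ i ∈ range (r + 1), (k.choose i : ℝ) * 7 ^ i := by
    exact_mod_cast h
  refine (two_rpow_le_two_pow_mul_pow hr).trans <|
    le_of_mul_le_mul_left ?_ (by positivity : (0 : ℝ) < 4 ^ k)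
  calc (4 : ℝ) ^ k * (2 ^ k * (3 / 7) ^ r) = 8 ^ k * (3 / 7) ^ r := by
        rw [← mul_assoc, ← mul_pow]; norm_num
    _ ≤ M * (∑ i ∈ range (r + 1), (k.choose i : ℝ) * 7 ^ i) * (3 / 7) ^ r := by gcongr
    _ ≤ M * 4 ^ k := by rw [mul_assoc]; gcongr
    _ = 4 ^ k * M := mul_comm ..

section OneHot

variable {ι β : Type*} [Fintype ι] [Fintype β] [DecidableEq β]

def oneHot (x : ι → β) : ι × β → Bool := fun p => decide (x p.1 = p.2)

theorem card_filter_oneHot_eq_true (x : ι → β) :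
    #{p | oneHot x p = true} = Fintype.card ι := by
  rw [card_filter, Fintype.sum_prod_type]
  simp [oneHot]

theorem card_filter_decide_eq_ne_decide_eq (a b : β) :
    #{c | decide (a = c) ≠ decide (b = c)} = if a = b then 0 else 2 := by
  split_ifs with hab
  · simp [hab]
  · rw [← card_pair hab]
    congr 1
    ext c
    by_cases hac : a = c <;> by_cases hbc : b = c <;> simp_all [eq_comm]

theorem hammingDist_oneHot (x y : ι → β) :
    hammingDist (oneHot x) (oneHot y) = 2 * hammingDist x y := by
  rw [hammingDist, hammingDist, card_filter, card_filter, Fintype.sum_prod_type, mul_sum]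
  refine sum_congr rfl fun i _ => ?_
  rw [← card_filter]
  change #{b | decide (x i = b) ≠ decide (y i = b)} = _
  rw [card_filter_decide_eq_ne_decide_eq]
  split_ifs <;> simp_all

end OneHot

theorem card_filter_comp_equiv {ι ι' : Type*} [Fintype ι] [Fintype ι'] (e : ι' ≃ ι)
    (p : ι → Prop) [DecidablePred p] : #{j | p (e j)} = #{i | p i} :=
  card_equiv e (by simp)

theorem hammingDist_comp_equiv {ι ι' β : Type*} [Fintype ι] [Fintype ι'] [DecidableEq β]
    (e : ι' ≃ ι) (x y : ι → β) : hammingDist (x ∘ e) (y ∘ e) = hammingDist x y :=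
  card_filter_comp_equiv e fun i => x i ≠ y i

theorem stmt5_general (k : ℕ) :
    ∃ Y : Finset (Fin (8 * k) → Bool),
      (2 : ℝ) ^ ((0.08 : ℝ) * k) ≤ (Y.card : ℝ) ∧
      (∀ y ∈ Y, (Finset.univ.filter (fun i => y i = true)).card = k) ∧
      (∀ y ∈ Y, ∀ y' ∈ Y, y ≠ y' → (3 * k : ℝ) / 2 ≤ (hammingDist y y' : ℝ)) := by
  obtain ⟨C, hCdist, hCcard⟩ := exists_code_card_pow_le (ι := Fin k) (β := Fin 8) (3 * k / 4)
  simp only [Fintype.card_fin, Nat.add_one_sub_one] at hCcard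
  let e : Fin (8 * k) ≃ Fin k × Fin 8 := (finCongr (mul_comm 8 k)).trans finProdFinEquiv.symm
  let encode (x : Fin k → Fin 8) : Fin (8 * k) → Bool := oneHot x ∘ e
  have hdist (x y : Fin k → Fin 8) : hammingDist (encode x) (encode y) = 2 * hammingDist x y := by
    rw [hammingDist_comp_equiv, hammingDist_oneHot]
  have hinj : Function.Injective encode := fun x y hxy => by
    simpa [hdist] using congrArg (hammingDist (encode x)) hxy
  refine ⟨C.image encode, ?_, ?_, ?_⟩
  · rw [card_image_of_injective C hinj]
    exact two_rpow_le_of_pow_le_mul_sum (by omega) hCcard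
  · simp only [mem_image, forall_exists_index, and_imp]
    rintro _ x - rfl
    calc #{i | encode x i = true} = #{p | oneHot x p = true} :=
          card_filter_comp_equiv e fun p => oneHot x p = true
      _ = k := by rw [card_filter_oneHot_eq_true, Fintype.card_fin]
  · simp only [mem_image, forall_exists_index, and_imp]
    rintro _ x hx rfl _ y hy rfl hne
    have hfar := hCdist hx hy (ne_of_apply_ne encode hne)
    rw [hdist, div_le_iff₀ two_pos]
    exact_mod_cast (by omega : 3 * k ≤ 2 * hammingDist x y * 2)

/-- For every integer `k ≥ 1` there is a set `Y ⊆ {0,1}^{8k}` with `|Y| ≥ 2^{0.08k}`,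
every vector in `Y` having exactly `k` ones, and minimum Hamming distance `≥ 3k/2`. -/
theorem stmt5 (k : ℕ) (hk : 1 ≤ k) :
    ∃ Y : Finset (Fin (8 * k) → Bool),
      (2 : ℝ) ^ ((0.08 : ℝ) * k) ≤ (Y.card : ℝ) ∧
      (∀ y ∈ Y, (Finset.univ.filter (fun i => y i = true)).card = k) ∧
      (∀ y ∈ Y, ∀ y' ∈ Y, y ≠ y' → (3 * k : ℝ) / 2 ≤ (hammingDist y y' : ℝ)) :=
  stmt5_general k
end
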